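/- arXiv:1912.08294 — 2 statements merged into one kernel-verified Lean document; each statement's English description precedes it below -/
import Mathlib

section
/- Let ε ∈ (0, 3/4], Y ∈ C^{n1×...×nd} a rank-r tensor in standard form, and for each j ∈ [d] let A_j ∈ C^{mj×nj} be an (ε/4d)-JL embedding of the set S'_j = {y_k^{(j)} ± y_h^{(j)}, y_k^{(j)} ± i y_h^{(j)} : 1 ≤ h < k ≤ r} ∪ {y_k^{(j)} : k ∈ [r]}. Then |‖Y‖² - ‖Y ×_1 A_1 ··· ×_d A_d‖²| ≤ ε(e + e²√(r(r-1)) · max(ε^{d-1}, μ_Y^{d-1})) ‖α‖₂² ≤ ε e²(r+1)‖α‖₂². -/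
open scoped BigOperators

/-- Squared Euclidean (Frobenius) norm of a tensor. -/
noncomputable def tnsq {ι : Type*} [Fintype ι] (X : ι → ℂ) : ℝ := ∑ i, ‖X i‖ ^ 2

/-- Squared Euclidean norm of a vector. -/
noncomputable def nsq {n : ℕ} (x : Fin n → ℂ) : ℝ := ∑ i, ‖x i‖ ^ 2

/-- `A` is an `ε`-JL embedding of `S ⊆ ℂ^n`. -/
def IsJL {m n : ℕ} (ε : ℝ) (A : Matrix (Fin m) (Fin n) ℂ) (S : Set (Fin n → ℂ)) : Prop :=
  ∀ x ∈ S, ∃ e ∈ Set.Ioo (-ε) ε, nsq (A.mulVec x) = (1 + e) * nsq x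

/-- The multi-mode product `X ×₁ A₁ ×₂ A₂ ⋯ ×_d A_d`. -/
noncomputable def multiProd {d : ℕ} {n m : Fin d → ℕ}
    (A : ∀ j, Matrix (Fin (m j)) (Fin (n j)) ℂ)
    (X : ((i : Fin d) → Fin (n i)) → ℂ) : ((i : Fin d) → Fin (m i)) → ℂ :=
  fun idx => ∑ t : (i : Fin d) → Fin (n i), (∏ j, A j (idx j) (t j)) * X t

/-- The rank-`r` CP tensor `Y = Σ_k α_k ○_ℓ y_k^{(ℓ)}` in standard form. -/
noncomputable def cpTensor {d r : ℕ} {n : Fin d → ℕ} (α : Fin r → ℂ)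
    (y : Fin r → (ℓ : Fin d) → Fin (n ℓ) → ℂ) : ((i : Fin d) → Fin (n i)) → ℂ :=
  fun idx => ∑ k, α k * ∏ ℓ, y k ℓ (idx ℓ)

/-- The mode-`ℓ` coherence `μ_{Y,ℓ} = max_{k ≠ h} |⟨y_k^{(ℓ)}, y_h^{(ℓ)}⟩|`. -/
noncomputable def modeCoh {d r : ℕ} {n : Fin d → ℕ}
    (y : Fin r → (ℓ : Fin d) → Fin (n ℓ) → ℂ) (ℓ : Fin d) : ℝ :=
  ⨆ p : {p : Fin r × Fin r // p.1 ≠ p.2},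
    ‖∑ i, y p.1.1 ℓ i * (starRingEnd ℂ) (y p.1.2 ℓ i)‖

/-!
Expanding `‖Y‖²` over the CP decomposition gives `Re Σ_{k,h} α_k ᾱ_h Π_ℓ ⟨y_k^{(ℓ)}, y_h^{(ℓ)}⟩`,
and `Y ×₁ A₁ ⋯ ×_d A_d` is the CP tensor with the same coefficients and the vectors
`A_ℓ y_k^{(ℓ)}`. The JL property moves the diagonal Gram entries by at most `ε/4d`, and, through
the complex polarization identity applied to `y_k ± y_h`, `y_k ± i y_h`, the off-diagonal ones by
at most `ε/2d`. Perturbing each of `d` factors of size at most `M` by `δ` moves their product by at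
most `(M + δ)^d - M^d ≤ dδ(M + δ)^{d-1}`, which is at most `εe` on the diagonal (`M = 1`) and
`εe² max(ε, μ_Y)^{d-1}` off it; Cauchy–Schwarz over the `r(r-1)` off-diagonal pairs concludes.
-/

open Finset Complex Matrix

theorem norm_inner_map_sub_inner_le {E F : Type*} [NormedAddCommGroup E] [InnerProductSpace ℂ E]
    [NormedAddCommGroup F] [InnerProductSpace ℂ F] (T : E →ₗ[ℂ] F) {u v : E} {δ : ℝ}
    (hT : ∀ w ∈ ({u + v, u - v, u + I • v, u - I • v} : Set E),
      |‖T w‖ ^ 2 - ‖w‖ ^ 2| ≤ δ * ‖w‖ ^ 2) :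
    ‖inner ℂ (T u) (T v) - inner ℂ u v‖ ≤ δ * (‖u‖ ^ 2 + ‖v‖ ^ 2) := by
  have h₁ := abs_le.1 (hT (u + v) (by simp))
  have h₂ := abs_le.1 (hT (u - v) (by simp))
  have h₃ := abs_le.1 (hT (u + I • v) (by simp))
  have h₄ := abs_le.1 (hT (u - I • v) (by simp))
  have hre := re_inner_eq_norm_add_mul_self_sub_norm_sub_mul_self_div_four (𝕜 := ℂ) u v
  have hreT := re_inner_eq_norm_add_mul_self_sub_norm_sub_mul_self_div_four (𝕜 := ℂ) (T u) (T v)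
  have him := im_inner_eq_norm_sub_i_smul_mul_self_sub_norm_add_i_smul_mul_self_div_four
    (𝕜 := ℂ) u v
  have himT := im_inner_eq_norm_sub_i_smul_mul_self_sub_norm_add_i_smul_mul_self_div_four
    (𝕜 := ℂ) (T u) (T v)
  simp only [RCLike.I_to_complex, RCLike.re_to_complex, RCLike.im_to_complex, ← map_add,
    ← map_sub, ← map_smul, ← sq] at hre hreT him himT
  have hpar := parallelogram_law_with_norm ℂ u v
  have hparI := parallelogram_law_with_norm ℂ u (I • v)
  rw [norm_smul, Complex.norm_I, one_mul] at hparI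
  refine (norm_le_abs_re_add_abs_im _).trans ?_
  rw [sub_re, sub_im, hre, hreT, him, himT]
  calc _ ≤ δ * (‖u + v‖ ^ 2 + ‖u - v‖ ^ 2) / 4 + δ * (‖u - I • v‖ ^ 2 + ‖u + I • v‖ ^ 2) / 4 :=
        add_le_add (abs_le.2 ⟨by linarith, by linarith⟩) (abs_le.2 ⟨by linarith, by linarith⟩)
    _ = δ * (‖u‖ ^ 2 + ‖v‖ ^ 2) := by linear_combination (δ / 4) * (hpar + hparI)

theorem norm_prod_sub_prod_le {ι R : Type*} [NormedCommRing R] [NormOneClass R]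
    [DecidableEq ι] (s : Finset ι) {f g : ι → R} {δ M : ℝ}
    (hfg : ∀ i ∈ s, ‖f i - g i‖ ≤ δ) (hg : ∀ i ∈ s, ‖g i‖ ≤ M) :
    ‖∏ i ∈ s, f i - ∏ i ∈ s, g i‖ ≤ (M + δ) ^ #s - M ^ #s := by
  induction s using Finset.induction_on with
  | empty => simp
  | @insert a s ha ih =>
    rw [forall_mem_insert] at hfg hg
    have hM : 0 ≤ M := (norm_nonneg _).trans hg.1
    have hδ : 0 ≤ δ := (norm_nonneg _).trans hfg.1
    have hf : ‖∏ i ∈ s, f i‖ ≤ (M + δ) ^ #s := by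
      refine (Finset.norm_prod_le _ _).trans
        ((prod_le_prod (fun _ _ => norm_nonneg _) fun i hi => ?_).trans_eq (prod_const _))
      calc ‖f i‖ = ‖g i + (f i - g i)‖ := by rw [add_sub_cancel]
        _ ≤ M + δ := (norm_add_le _ _).trans (add_le_add (hg.2 i hi) (hfg.2 i hi))
    rw [prod_insert ha, prod_insert ha, card_insert_of_notMem ha, pow_succ', pow_succ']
    calc ‖f a * ∏ i ∈ s, f i - g a * ∏ i ∈ s, g i‖
        = ‖(f a - g a) * ∏ i ∈ s, f i + g a * (∏ i ∈ s, f i - ∏ i ∈ s, g i)‖ := by ring_nf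
      _ ≤ ‖f a - g a‖ * ‖∏ i ∈ s, f i‖ + ‖g a‖ * ‖∏ i ∈ s, f i - ∏ i ∈ s, g i‖ :=
        (norm_add_le _ _).trans (add_le_add (norm_mul_le _ _) (norm_mul_le _ _))
      _ ≤ δ * (M + δ) ^ #s + M * ((M + δ) ^ #s - M ^ #s) :=
        add_le_add (mul_le_mul hfg.1 hf (norm_nonneg _) hδ)
          (mul_le_mul hg.1 (ih hfg.2 hg.2) (norm_nonneg _) hM)
      _ = (M + δ) * (M + δ) ^ #s - M * M ^ #s := by ring

theorem add_div_pow_sub_pow_le {x M : ℝ} (hx : 0 ≤ x) (hxM : x ≤ M) (d : ℕ) :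
    (M + x / d) ^ d - M ^ d ≤ x * Real.exp 1 * M ^ (d - 1) := by
  have hM : 0 ≤ M := hx.trans hxM
  have hxd : 0 ≤ x / d := by positivity
  have hmv : (M + x / d) ^ d - M ^ d ≤ x * (M + x / d) ^ (d - 1) := by
    refine (le_abs_self _).trans ((abs_pow_sub_pow_le _ _ _).trans ?_)
    rw [add_sub_cancel_left, abs_of_nonneg hxd, abs_of_nonneg (by positivity),
      abs_of_nonneg hM, max_eq_left (by linarith)]
    gcongr
    rcases d.eq_zero_or_pos with rfl | hd
    · simpa using hx
    · rw [div_mul_cancel₀ _ (by positivity)]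
  have hexp : (1 + (d : ℝ)⁻¹) ^ (d - 1) ≤ Real.exp 1 :=
    (pow_le_pow_right₀ (by simp) (Nat.sub_le d 1)).trans Real.one_add_inv_pow_le_exp
  calc (M + x / d) ^ d - M ^ d ≤ x * (M + x / d) ^ (d - 1) := hmv
    _ ≤ x * (M * (1 + (d : ℝ)⁻¹)) ^ (d - 1) := by
      gcongr
      rw [mul_one_add, ← div_eq_mul_inv]
      gcongr
    _ ≤ x * Real.exp 1 * M ^ (d - 1) := by
      rw [mul_pow, mul_comm (M ^ _), ← mul_assoc]
      gcongr

theorem sum_offDiag_mul_le_sqrt_mul {ι : Type*} [Fintype ι] [DecidableEq ι] (a : ι → ℝ) :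
    ∑ p ∈ (univ : Finset ι).offDiag, a p.1 * a p.2 ≤
      √((Fintype.card ι : ℝ) * (Fintype.card ι - 1)) * ∑ k, a k ^ 2 := by
  have hcard : ((univ : Finset ι).offDiag.card : ℝ) = Fintype.card ι * (Fintype.card ι - 1) := by
    rw [offDiag_card, card_univ, Nat.cast_sub (Nat.le_mul_self _)]
    push_cast
    ring
  have hsq : ∑ p ∈ (univ : Finset ι).offDiag, (a p.1 * a p.2) ^ 2 ≤ (∑ k, a k ^ 2) ^ 2 := by
    calc ∑ p ∈ (univ : Finset ι).offDiag, (a p.1 * a p.2) ^ 2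
        ≤ ∑ p : ι × ι, (a p.1 * a p.2) ^ 2 :=
          sum_le_sum_of_subset_of_nonneg (subset_univ _) fun _ _ _ => sq_nonneg _
      _ = (∑ k, a k ^ 2) ^ 2 := by
        simp_rw [sq (∑ k, a k ^ 2), sum_mul_sum, ← Fintype.sum_prod_type', mul_pow]
  calc ∑ p ∈ (univ : Finset ι).offDiag, a p.1 * a p.2
      = ∑ p ∈ (univ : Finset ι).offDiag, 1 * (a p.1 * a p.2) := by simp_rw [one_mul]
    _ ≤ √(∑ p ∈ (univ : Finset ι).offDiag, 1 ^ 2) *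
          √(∑ p ∈ (univ : Finset ι).offDiag, (a p.1 * a p.2) ^ 2) :=
        Real.sum_mul_le_sqrt_mul_sqrt _ _ _
    _ ≤ √((Fintype.card ι : ℝ) * (Fintype.card ι - 1)) * ∑ k, a k ^ 2 := by
      rw [one_pow, sum_const, nsmul_one, hcard]
      gcongr
      exact (Real.sqrt_le_left (by positivity)).mpr hsq

theorem sum_sum_mul_le_of_diag_of_offDiag {ι : Type*} [Fintype ι] [DecidableEq ι] {a : ι → ℝ}
    (ha : ∀ k, 0 ≤ a k) {E : ι → ι → ℝ} {D₁ D₂ : ℝ} (hD₂ : 0 ≤ D₂)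
    (hdiag : ∀ k, E k k ≤ D₁) (hoff : ∀ k h, k ≠ h → E k h ≤ D₂) :
    ∑ k, ∑ h, a k * a h * E k h ≤
      (D₁ + D₂ * √((Fintype.card ι : ℝ) * (Fintype.card ι - 1))) * ∑ k, a k ^ 2 := by
  have hsplit : ∑ k, ∑ h, a k * a h * E k h = ∑ k, a k ^ 2 * E k k +
      ∑ p ∈ (univ : Finset ι).offDiag, a p.1 * a p.2 * E p.1 p.2 := by
    rw [← Fintype.sum_prod_type', ← univ_product_univ, ← diag_union_offDiag,
      sum_union (disjoint_diag_offDiag _), sum_diag]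
    simp_rw [sq]
  have hoff_sum : ∑ p ∈ (univ : Finset ι).offDiag, a p.1 * a p.2 * E p.1 p.2 ≤
      D₂ * ∑ p ∈ (univ : Finset ι).offDiag, a p.1 * a p.2 := by
    rw [mul_sum]
    refine sum_le_sum fun p hp => ?_
    rw [mul_comm D₂]
    exact mul_le_mul_of_nonneg_left (hoff _ _ (mem_offDiag.1 hp).2.2)
      (mul_nonneg (ha _) (ha _))
  calc ∑ k, ∑ h, a k * a h * E k h
      ≤ ∑ k, a k ^ 2 * D₁ + D₂ * ∑ p ∈ (univ : Finset ι).offDiag, a p.1 * a p.2 := by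
        rw [hsplit]
        exact add_le_add (sum_le_sum fun k _ => by gcongr; exact hdiag k) hoff_sum
    _ ≤ ∑ k, a k ^ 2 * D₁ +
          D₂ * (√((Fintype.card ι : ℝ) * (Fintype.card ι - 1)) * ∑ k, a k ^ 2) := by
        gcongr
        exact sum_offDiag_mul_le_sqrt_mul a
    _ = (D₁ + D₂ * √((Fintype.card ι : ℝ) * (Fintype.card ι - 1))) * ∑ k, a k ^ 2 := by
        rw [← sum_mul]
        ring

theorem exp_one_add_exp_two_mul_sqrt_le {r X : ℝ} (hr : 0 ≤ r) (hX₀ : 0 ≤ X) (hX₁ : X ≤ 1) :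
    Real.exp 1 + Real.exp 2 * √(r * (r - 1)) * X ≤ Real.exp 2 * (r + 1) := by
  have hsqrt : √(r * (r - 1)) ≤ r := (Real.sqrt_le_left hr).2 (by nlinarith)
  have hexp : Real.exp 1 ≤ Real.exp 2 := Real.exp_le_exp.2 (by norm_num)
  calc Real.exp 1 + Real.exp 2 * √(r * (r - 1)) * X ≤ Real.exp 2 + Real.exp 2 * r * 1 := by
        gcongr
    _ = Real.exp 2 * (r + 1) := by ring

theorem nsq_eq_norm_toLp_sq {N : ℕ} (x : Fin N → ℂ) : nsq x = ‖WithLp.toLp 2 x‖ ^ 2 := by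
  rw [EuclideanSpace.norm_sq_eq]
  rfl

namespace IsJL

variable {M N : ℕ} {δ : ℝ} {A : Matrix (Fin M) (Fin N) ℂ} {S : Set (Fin N → ℂ)}

theorem abs_nsq_mulVec_sub_le (hA : IsJL δ A S) {x : Fin N → ℂ} (hx : x ∈ S) :
    |nsq (A *ᵥ x) - nsq x| ≤ δ * nsq x := by
  obtain ⟨e, he, hAx⟩ := hA x hx
  have hx0 : 0 ≤ nsq x := by rw [nsq_eq_norm_toLp_sq]; positivity
  rw [hAx, show (1 + e) * nsq x - nsq x = e * nsq x by ring, abs_mul, abs_of_nonneg hx0]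
  exact mul_le_mul_of_nonneg_right (abs_le.2 ⟨he.1.le, he.2.le⟩) hx0

theorem norm_dotProduct_mulVec_sub_le (hA : IsJL δ A S) {u v : Fin N → ℂ}
    (hS : {u + v, u - v, u + I • v, u - I • v} ⊆ S) :
    ‖(A *ᵥ v) ⬝ᵥ star (A *ᵥ u) - v ⬝ᵥ star u‖ ≤ δ * (nsq u + nsq v) := by
  have hT : ∀ w ∈ ({WithLp.toLp 2 u + WithLp.toLp 2 v, WithLp.toLp 2 u - WithLp.toLp 2 v,
      WithLp.toLp 2 u + I • WithLp.toLp 2 v, WithLp.toLp 2 u - I • WithLp.toLp 2 v} :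
        Set (EuclideanSpace ℂ (Fin N))),
      |‖toLpLin 2 2 A w‖ ^ 2 - ‖w‖ ^ 2| ≤ δ * ‖w‖ ^ 2 := by
    intro w hw
    have hw' : WithLp.ofLp w ∈ S := hS (by
      simp only [Set.mem_insert_iff, Set.mem_singleton_iff] at hw ⊢
      rcases hw with rfl | rfl | rfl | rfl <;> simp)
    have h := hA.abs_nsq_mulVec_sub_le hw'
    rwa [nsq_eq_norm_toLp_sq, nsq_eq_norm_toLp_sq, WithLp.toLp_ofLp] at h
  have h := norm_inner_map_sub_inner_le (toLpLin 2 2 A) hT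
  rwa [toLpLin_toLp, toLpLin_toLp, toLin'_apply, toLin'_apply, EuclideanSpace.inner_toLp_toLp,
    EuclideanSpace.inner_toLp_toLp, ← nsq_eq_norm_toLp_sq, ← nsq_eq_norm_toLp_sq] at h

end IsJL

section CPTensor

variable {d r : ℕ} {n m : Fin d → ℕ}

/-- `⟨z_k^{(ℓ)}, z_h^{(ℓ)}⟩`, linear in `k`; in `EuclideanSpace` it is `⟪z_h^{(ℓ)}, z_k^{(ℓ)}⟫`. -/
noncomputable def modeGram (z : Fin r → (ℓ : Fin d) → Fin (n ℓ) → ℂ) (ℓ : Fin d)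
    (k h : Fin r) : ℂ :=
  z k ℓ ⬝ᵥ star (z h ℓ)

theorem modeGram_swap (z : Fin r → (ℓ : Fin d) → Fin (n ℓ) → ℂ) (ℓ : Fin d) (k h : Fin r) :
    modeGram z ℓ h k = star (modeGram z ℓ k h) := by
  rw [modeGram, modeGram, ← star_dotProduct_star, star_star]

theorem modeGram_self (z : Fin r → (ℓ : Fin d) → Fin (n ℓ) → ℂ) (ℓ : Fin d) (k : Fin r) :
    modeGram z ℓ k k = nsq (z k ℓ) := by
  simp only [modeGram, dotProduct, nsq, Pi.star_apply, Complex.star_def, Complex.mul_conj,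
    Complex.normSq_eq_norm_sq, Complex.ofReal_sum, Complex.ofReal_pow]

theorem tnsq_cpTensor (α : Fin r → ℂ) (z : Fin r → (ℓ : Fin d) → Fin (n ℓ) → ℂ) :
    tnsq (cpTensor α z) = (∑ k, ∑ h, α k * star (α h) * ∏ ℓ, modeGram z ℓ k h).re := by
  have hsq : tnsq (cpTensor α z) = (∑ t, cpTensor α z t * star (cpTensor α z t)).re := by
    simp only [tnsq, Complex.re_sum, Complex.star_def, Complex.mul_conj,
      Complex.normSq_eq_norm_sq, Complex.ofReal_re]
  rw [hsq]
  congr 1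
  have hpoint : ∀ t, cpTensor α z t * star (cpTensor α z t) =
      ∑ k, ∑ h, α k * star (α h) * ∏ ℓ, z k ℓ (t ℓ) * star (z h ℓ (t ℓ)) := fun t => by
    simp only [cpTensor, star_sum, star_mul', star_prod, sum_mul_sum, prod_mul_distrib]
    exact sum_congr rfl fun k _ => sum_congr rfl fun h _ => by ring
  rw [sum_congr rfl fun t _ => hpoint t, sum_comm]
  refine sum_congr rfl fun k _ => ?_
  rw [sum_comm]
  refine sum_congr rfl fun h _ => ?_
  simp only [← mul_sum, modeGram, dotProduct, Pi.star_apply, Fintype.prod_sum]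

theorem abs_tnsq_cpTensor_sub_le (α : Fin r → ℂ) (z : Fin r → (ℓ : Fin d) → Fin (n ℓ) → ℂ)
    (w : Fin r → (ℓ : Fin d) → Fin (m ℓ) → ℂ) :
    |tnsq (cpTensor α z) - tnsq (cpTensor α w)| ≤
      ∑ k, ∑ h, ‖α k‖ * ‖α h‖ * ‖∏ ℓ, modeGram z ℓ k h - ∏ ℓ, modeGram w ℓ k h‖ := by
  rw [tnsq_cpTensor, tnsq_cpTensor, ← Complex.sub_re, ← sum_sub_distrib]
  refine (Complex.abs_re_le_norm _).trans ((norm_sum_le _ _).trans (sum_le_sum fun k _ => ?_))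
  rw [← sum_sub_distrib]
  refine (norm_sum_le _ _).trans (sum_le_sum fun h _ => le_of_eq ?_)
  rw [← mul_sub, norm_mul, norm_mul, norm_star]

theorem multiProd_cpTensor (A : ∀ j, Matrix (Fin (m j)) (Fin (n j)) ℂ) (α : Fin r → ℂ)
    (y : Fin r → (ℓ : Fin d) → Fin (n ℓ) → ℂ) :
    multiProd A (cpTensor α y) = cpTensor α fun k j => A j *ᵥ y k j := by
  funext t
  simp only [multiProd, cpTensor, mul_sum, Matrix.mulVec, dotProduct, Fintype.prod_sum]
  rw [sum_comm]
  refine sum_congr rfl fun k _ => sum_congr rfl fun s _ => ?_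
  rw [prod_mul_distrib]
  ring

theorem norm_modeGram_le_modeCoh (y : Fin r → (ℓ : Fin d) → Fin (n ℓ) → ℂ) (ℓ : Fin d)
    {k h : Fin r} (hkh : k ≠ h) : ‖modeGram y ℓ k h‖ ≤ modeCoh y ℓ :=
  le_ciSup (f := fun p : {p : Fin r × Fin r // p.1 ≠ p.2} => ‖modeGram y ℓ p.1.1 p.1.2‖)
    (Set.finite_range _).bddAbove ⟨(k, h), hkh⟩

theorem modeCoh_nonneg (y : Fin r → (ℓ : Fin d) → Fin (n ℓ) → ℂ) (ℓ : Fin d) :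
    0 ≤ modeCoh y ℓ :=
  Real.iSup_nonneg fun _ => norm_nonneg _

theorem modeCoh_le_one {y : Fin r → (ℓ : Fin d) → Fin (n ℓ) → ℂ}
    (hy : ∀ k ℓ, nsq (y k ℓ) = 1) (ℓ : Fin d) : modeCoh y ℓ ≤ 1 := by
  refine Real.iSup_le (fun p => ?_) zero_le_one
  have h := norm_inner_le_norm (𝕜 := ℂ) (WithLp.toLp 2 (y p.1.2 ℓ)) (WithLp.toLp 2 (y p.1.1 ℓ))
  rw [EuclideanSpace.inner_toLp_toLp] at h
  have hy' : ∀ k, ‖WithLp.toLp 2 (y k ℓ)‖ = 1 := fun k =>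
    (pow_eq_one_iff_of_nonneg (norm_nonneg _) two_ne_zero).1 (by rw [← nsq_eq_norm_toLp_sq, hy])
  exact h.trans_eq (by rw [hy', hy', one_mul])

end CPTensor

section ModewiseJL

variable {d r : ℕ} {n m : Fin d → ℕ} {y : Fin r → (ℓ : Fin d) → Fin (n ℓ) → ℂ}
  {A : ∀ j, Matrix (Fin (m j)) (Fin (n j)) ℂ}

/-- The set `S'_j` of the statement. -/
def modewiseJLSet (y : Fin r → (ℓ : Fin d) → Fin (n ℓ) → ℂ) (j : Fin d) :
    Set (Fin (n j) → ℂ) :=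
  {v | ∃ k h : Fin r, h < k ∧
      (v = y k j - y h j ∨ v = y k j + y h j ∨
        v = y k j - Complex.I • y h j ∨ v = y k j + Complex.I • y h j)} ∪
    Set.range fun k => y k j

theorem norm_modeGram_mulVec_self_sub_one_le {δ : ℝ} (hy : ∀ k ℓ, nsq (y k ℓ) = 1)
    (hA : ∀ j, IsJL δ (A j) (modewiseJLSet y j)) (ℓ : Fin d) (k : Fin r) :
    ‖modeGram (fun k j => A j *ᵥ y k j) ℓ k k - 1‖ ≤ δ := by
  have h := (hA ℓ).abs_nsq_mulVec_sub_le (Or.inr ⟨k, rfl⟩)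
  rw [hy, mul_one] at h
  rwa [modeGram_self, ← Complex.ofReal_one, ← Complex.ofReal_sub, Complex.norm_real,
    Real.norm_eq_abs]

theorem norm_modeGram_mulVec_sub_modeGram_le {δ : ℝ} (hy : ∀ k ℓ, nsq (y k ℓ) = 1)
    (hA : ∀ j, IsJL δ (A j) (modewiseJLSet y j)) (ℓ : Fin d) {k h : Fin r} (hkh : k ≠ h) :
    ‖modeGram (fun k j => A j *ᵥ y k j) ℓ k h - modeGram y ℓ k h‖ ≤ 2 * δ := by
  have hlt : ∀ {k h : Fin r}, h < k →
      ‖modeGram (fun k j => A j *ᵥ y k j) ℓ h k - modeGram y ℓ h k‖ ≤ 2 * δ := by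
    intro k h hhk
    have hS : {y k ℓ + y h ℓ, y k ℓ - y h ℓ, y k ℓ + I • y h ℓ, y k ℓ - I • y h ℓ} ⊆
        modewiseJLSet y ℓ := by
      intro w hw
      simp only [Set.mem_insert_iff, Set.mem_singleton_iff] at hw
      exact Or.inl ⟨k, h, hhk, by tauto⟩
    have h := (hA ℓ).norm_dotProduct_mulVec_sub_le hS
    rwa [hy, hy, one_add_one_eq_two, mul_comm] at h
  rcases hkh.lt_or_gt with hkh | hkh
  · exact hlt hkh
  · rw [modeGram_swap, modeGram_swap y, ← star_sub, norm_star]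
    exact hlt hkh

theorem norm_prod_modeGram_self_sub_le {ε : ℝ} (hε : 0 ≤ ε) (hε4 : ε ≤ 4)
    (hy : ∀ k ℓ, nsq (y k ℓ) = 1) (hA : ∀ j, IsJL (ε / (4 * d)) (A j) (modewiseJLSet y j))
    (k : Fin r) :
    ‖∏ ℓ, modeGram y ℓ k k - ∏ ℓ, modeGram (fun k j => A j *ᵥ y k j) ℓ k k‖ ≤
      ε * Real.exp 1 := by
  have hone : ∀ ℓ, modeGram y ℓ k k = 1 := fun ℓ => by rw [modeGram_self, hy, Complex.ofReal_one]
  have h := norm_prod_sub_prod_le univ (M := 1)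
    (fun ℓ _ => (norm_modeGram_mulVec_self_sub_one_le hy hA ℓ k).trans_eq (div_div ε 4 d).symm)
    (fun _ _ => norm_one.le)
  rw [card_univ, Fintype.card_fin] at h
  rw [norm_sub_rev, Finset.prod_congr rfl fun ℓ _ => hone ℓ]
  calc _ ≤ (1 + ε / 4 / d) ^ d - 1 ^ d := h
    _ ≤ ε / 4 * Real.exp 1 * 1 ^ (d - 1) := add_div_pow_sub_pow_le (by positivity) (by linarith) d
    _ ≤ ε * Real.exp 1 := by
      rw [one_pow, mul_one]
      gcongr
      linarith

theorem norm_prod_modeGram_sub_le {ε M : ℝ} (hε : 0 ≤ ε) (hεM : ε ≤ M)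
    (hy : ∀ k ℓ, nsq (y k ℓ) = 1) (hcoh : ∀ ℓ, modeCoh y ℓ ≤ M)
    (hA : ∀ j, IsJL (ε / (4 * d)) (A j) (modewiseJLSet y j)) {k h : Fin r} (hkh : k ≠ h) :
    ‖∏ ℓ, modeGram y ℓ k h - ∏ ℓ, modeGram (fun k j => A j *ᵥ y k j) ℓ k h‖ ≤
      ε * Real.exp 2 * M ^ (d - 1) := by
  have h := norm_prod_sub_prod_le univ (δ := ε / 2 / d) (M := M)
    (fun ℓ _ => (norm_modeGram_mulVec_sub_modeGram_le hy hA ℓ hkh).trans_eq (by ring))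
    (fun ℓ _ => (norm_modeGram_le_modeCoh y ℓ hkh).trans (hcoh ℓ))
  rw [card_univ, Fintype.card_fin] at h
  rw [norm_sub_rev]
  calc _ ≤ (M + ε / 2 / d) ^ d - M ^ d := h
    _ ≤ ε / 2 * Real.exp 1 * M ^ (d - 1) := add_div_pow_sub_pow_le (by positivity) (by linarith) d
    _ ≤ ε * Real.exp 2 * M ^ (d - 1) := by
      have hM : 0 ≤ M := hε.trans hεM
      gcongr
      · linarith
      · norm_num

end ModewiseJL

/-- Let `ε ∈ (0, 3/4]`, `Y` a rank-`r` tensor in standard form, and for each `j ∈ [d]`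
let `A_j` be an `(ε/4d)`-JL embedding of
`S'_j = {y_k^{(j)} ± y_h^{(j)}, y_k^{(j)} ± i y_h^{(j)} : h < k} ∪ {y_k^{(j)}}`.  Then
`|‖Y‖² - ‖Y ×₁ A₁ ⋯ ×_d A_d‖²|
  ≤ ε(e + e²√(r(r-1))·max(ε^{d-1}, μ_Y^{d-1}))‖α‖₂² ≤ ε e²(r+1)‖α‖₂²`. -/
theorem modewise_jl_cp_embedding {d r : ℕ} {n m : Fin d → ℕ} {ε : ℝ}
    (hε : ε ∈ Set.Ioc (0 : ℝ) (3 / 4)) (α : Fin r → ℂ)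
    (y : Fin r → (ℓ : Fin d) → Fin (n ℓ) → ℂ)
    (hnorm : ∀ k ℓ, ∑ i, ‖y k ℓ i‖ ^ 2 = (1 : ℝ))
    (A : ∀ j, Matrix (Fin (m j)) (Fin (n j)) ℂ)
    (hA : ∀ j, IsJL (ε / (4 * d)) (A j)
      ({v | ∃ k h : Fin r, h < k ∧
          (v = y k j - y h j ∨ v = y k j + y h j ∨
           v = y k j - Complex.I • y h j ∨ v = y k j + Complex.I • y h j)} ∪
        Set.range fun k => y k j)) :
    |tnsq (cpTensor α y) - tnsq (multiProd A (cpTensor α y))| ≤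
        ε * (Real.exp 1 + Real.exp 2 * Real.sqrt ((r : ℝ) * ((r : ℝ) - 1)) *
          max (ε ^ (d - 1)) ((⨆ ℓ, modeCoh y ℓ) ^ (d - 1))) * (∑ k, ‖α k‖ ^ 2) ∧
      ε * (Real.exp 1 + Real.exp 2 * Real.sqrt ((r : ℝ) * ((r : ℝ) - 1)) *
          max (ε ^ (d - 1)) ((⨆ ℓ, modeCoh y ℓ) ^ (d - 1))) * (∑ k, ‖α k‖ ^ 2) ≤
        ε * Real.exp 2 * ((r : ℝ) + 1) * (∑ k, ‖α k‖ ^ 2) := by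
  obtain ⟨hε₀, hε₁⟩ := hε
  set μ := ⨆ ℓ, modeCoh y ℓ
  have hμ₀ : 0 ≤ μ := Real.iSup_nonneg (modeCoh_nonneg y)
  have hμ₁ : μ ≤ 1 := Real.iSup_le (modeCoh_le_one hnorm) zero_le_one
  have hcoh : ∀ ℓ, modeCoh y ℓ ≤ max ε μ := fun ℓ =>
    (le_ciSup (Set.finite_range _).bddAbove ℓ).trans (le_max_right _ _)
  have hmax : max ε μ ^ (d - 1) = max (ε ^ (d - 1)) (μ ^ (d - 1)) :=
    (pow_left_monotoneOn (M₀ := ℝ)).map_max hε₀.le hμ₀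
  have hdiag := norm_prod_modeGram_self_sub_le hε₀.le (by linarith) hnorm hA
  have hoff := fun k h (hkh : k ≠ h) =>
    norm_prod_modeGram_sub_le hε₀.le (le_max_left ε μ) hnorm hcoh hA hkh
  have hX := pow_le_one₀ (n := d - 1) (le_max_of_le_left hε₀.le) (max_le (by linarith) hμ₁)
  rw [multiProd_cpTensor, ← hmax]
  refine ⟨(abs_tnsq_cpTensor_sub_le α _ _).trans ?_, ?_⟩
  · refine (sum_sum_mul_le_of_diag_of_offDiag (fun k => norm_nonneg (α k)) (by positivity)
      hdiag hoff).trans_eq ?_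
    rw [Fintype.card_fin]
    ring
  · have h := exp_one_add_exp_two_mul_sqrt_le (r.cast_nonneg (α := ℝ)) (by positivity) hX
    rw [mul_assoc ε (Real.exp 2)]
    gcongr
end

section
/- Let X ∈ C^{n1×...×nd}, L an r-dimensional subspace of C^{n1×...×nd} with orthonormal basis {T_k}, P the orthogonal projection onto the orthogonal complement of L, and ε ∈ (0,1). Suppose a linear map L₀ is an (ε/6)-JL embedding of L ∪ {P(X)} and an (ε/(24√r))-JL embedding of the 4r tensors {P(X)/‖P(X)‖ ± T_k, P(X)/‖P(X)‖ ± i T_k : k ∈ [r]} (assume P(X) ≠ 0). Then |‖L₀(X - Y)‖² - ‖X - Y‖²| ≤ (ε/3)‖X - Y‖² holds for all Y ∈ L. -/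
open scoped BigOperators

/-- Tensor inner product `⟨X, Y⟩ = Σ X_i conj(Y_i)`. -/
noncomputable def ttip {ι : Type*} [Fintype ι] (X Y : ι → ℂ) : ℂ :=
  ∑ i, X i * (starRingEnd ℂ) (Y i)

/-- A linear map `L₀` between tensor spaces is an `ε`-JL embedding of a set `S`. -/
def IsJLmap {ι κ : Type*} [Fintype ι] [Fintype κ] (ε : ℝ)
    (L₀ : (ι → ℂ) →ₗ[ℂ] (κ → ℂ)) (S : Set (ι → ℂ)) : Prop :=
  ∀ X ∈ S, ∃ e ∈ Set.Ioo (-ε) ε, tnsq (L₀ X) = (1 + e) * tnsq X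

/-- The orthogonal projection of `X` onto the orthogonal complement of the span of the
orthonormal family `T`, namely `P_{L^⊥}(X) = X - Σ_k ⟨X, T_k⟩ T_k`. -/
noncomputable def projPerp {ι : Type*} [Fintype ι] {r : ℕ}
    (T : Fin r → ι → ℂ) (X : ι → ℂ) : ι → ℂ :=
  X - ∑ k, ttip X (T k) • T k

/-! Write `X - Y = W + V` with `W = P(X) ⟂ L` and `V ∈ L`, so that `‖X - Y‖² = ‖W‖² + ‖V‖²` and
the distortion of `X - Y` is the distortion of `W`, that of `V` (each at most `ε/6` times the
squared norm), plus the cross term `2 Re ⟪L₀ W, L₀ V⟫`. With `u = W / ‖W‖`, polarization turns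
the bounds on `u ± T_k` and `u ± i T_k` into `|⟪L₀ u, L₀ T_k⟫| ≤ ε / (12 √r)`; expanding `V` in
the `T_k` and applying Cauchy–Schwarz gives `|⟪L₀ W, L₀ V⟫| ≤ (ε/12) ‖W‖ ‖V‖`, so the total
distortion is at most `ε/4 ≤ ε/3`. The argument runs in an arbitrary complex inner product space;
tensors are viewed in `EuclideanSpace`, where `tnsq` is the squared norm and `ttip X Y = ⟪Y, X⟫`. -/

open scoped InnerProductSpace

section RCLike

variable {𝕜 E F ι : Type*} [RCLike 𝕜] [NormedAddCommGroup E] [InnerProductSpace 𝕜 E]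
  [NormedAddCommGroup F] [InnerProductSpace 𝕜 F]

def IsJLEmbedding (δ : ℝ) (L : E →ₗ[𝕜] F) (S : Set E) : Prop :=
  ∀ z ∈ S, |‖L z‖ ^ 2 - ‖z‖ ^ 2| ≤ δ * ‖z‖ ^ 2

theorem IsJLEmbedding.mono {δ : ℝ} {L : E →ₗ[𝕜] F} {S S' : Set E} (h : IsJLEmbedding δ L S)
    (hS : S' ⊆ S) : IsJLEmbedding δ L S' :=
  fun z hz => h z (hS hz)

open RCLike in
theorem abs_re_inner_map_sub_le {δ : ℝ} {L : E →ₗ[𝕜] F} {x y : E}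
    (h : IsJLEmbedding δ L {x + y, x - y}) :
    |re ⟪L x, L y⟫_𝕜 - re ⟪x, y⟫_𝕜| ≤ δ * (‖x‖ ^ 2 + ‖y‖ ^ 2) / 2 := by
  have hadd := abs_le.1 (h (x + y) (by simp))
  have hsub := abs_le.1 (h (x - y) (by simp))
  have hpar : δ * ‖x + y‖ ^ 2 + δ * ‖x - y‖ ^ 2 = 2 * δ * (‖x‖ ^ 2 + ‖y‖ ^ 2) := by
    rw [← mul_add, parallelogram_law_with_norm 𝕜]; ring
  simp only [re_inner_eq_norm_add_mul_self_sub_norm_sub_mul_self_div_four, ← map_add, ← map_sub,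
    ← sq]
  rw [abs_le]
  constructor <;> linarith

theorem Orthonormal.norm_sum_smul_sq [Fintype ι] {T : ι → E} (hT : Orthonormal 𝕜 T)
    (c : ι → 𝕜) : ‖∑ k, c k • T k‖ ^ 2 = ∑ k, ‖c k‖ ^ 2 := by
  rw [@norm_sq_eq_re_inner 𝕜, hT.inner_sum, map_sum]
  simp [RCLike.conj_mul]

theorem Orthonormal.norm_apply_le_of_mem_span [Fintype ι] {T : ι → E} (hT : Orthonormal 𝕜 T)
    (f : E →ₗ[𝕜] 𝕜) {v : E} (hv : v ∈ Submodule.span 𝕜 (Set.range T)) :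
    ‖f v‖ ≤ √(∑ k, ‖f (T k)‖ ^ 2) * ‖v‖ := by
  obtain ⟨c, rfl⟩ := (Submodule.mem_span_range_iff_exists_fun 𝕜).1 hv
  rw [← Real.sqrt_sq (norm_nonneg (∑ k, c k • T k)), hT.norm_sum_smul_sq, mul_comm]
  calc ‖f (∑ k, c k • T k)‖ ≤ ∑ k, ‖c k‖ * ‖f (T k)‖ := by
        simpa [norm_mul] using norm_sum_le Finset.univ fun k => c k * f (T k)
    _ ≤ √(∑ k, ‖c k‖ ^ 2) * √(∑ k, ‖f (T k)‖ ^ 2) :=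
        Real.sum_mul_le_sqrt_mul_sqrt _ _ _

theorem sqrt_sum_sq_le_of_forall_abs_le [Fintype ι] {f : ι → ℝ} {c : ℝ} (hc : 0 ≤ c)
    (hf : ∀ k, |f k| ≤ c / √(Fintype.card ι)) : √(∑ k, f k ^ 2) ≤ c := by
  set n : ℝ := (Fintype.card ι : ℝ)
  rw [← Real.sqrt_sq hc]
  gcongr
  calc ∑ k, f k ^ 2 = ∑ k, |f k| ^ 2 := by simp only [sq_abs]
    _ ≤ ∑ k : ι, (c / √n) ^ 2 := by gcongr with k; exact hf k
    _ = c ^ 2 * (n / n) := by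
      rw [Finset.sum_const, Finset.card_univ, nsmul_eq_mul, div_pow,
        Real.sq_sqrt (Nat.cast_nonneg _)]
      ring
    _ ≤ c ^ 2 := mul_le_of_le_one_right (sq_nonneg _) (div_self_le_one n)

open RCLike in
theorem abs_norm_map_add_sq_sub_le {a b : ℝ} {L : E →ₗ[𝕜] F} {W V : E} (hWV : ⟪W, V⟫_𝕜 = 0)
    (hJL : IsJLEmbedding a L {W, V}) (hb : 0 ≤ b) (hcross : ‖⟪L W, L V⟫_𝕜‖ ≤ b * ‖W‖ * ‖V‖) :
    |‖L (W + V)‖ ^ 2 - ‖W + V‖ ^ 2| ≤ (a + b) * ‖W + V‖ ^ 2 := by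
  have hW := abs_le.1 (hJL W (by simp))
  have hV := abs_le.1 (hJL V (by simp))
  have hre := abs_le.1 ((abs_re_le_norm ⟪L W, L V⟫_𝕜).trans hcross)
  have hAMGM : 2 * (b * ‖W‖ * ‖V‖) ≤ b * (‖W‖ ^ 2 + ‖V‖ ^ 2) := by
    nlinarith [mul_le_mul_of_nonneg_left (two_mul_le_add_sq ‖W‖ ‖V‖) hb]
  have hpyth : ‖W + V‖ ^ 2 = ‖W‖ ^ 2 + ‖V‖ ^ 2 := by simp [@norm_add_sq 𝕜, hWV]
  rw [map_add, @norm_add_sq 𝕜, hpyth, abs_le]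
  constructor <;> linarith

end RCLike

section Complex

open Complex

variable {E F ι : Type*} [NormedAddCommGroup E] [InnerProductSpace ℂ E]
  [NormedAddCommGroup F] [InnerProductSpace ℂ F]

theorem norm_inner_map_le_of_orthonormal_pair {δ : ℝ} {L : E →ₗ[ℂ] F} {u v : E} (hu : ‖u‖ = 1)
    (hv : ‖v‖ = 1) (huv : ⟪u, v⟫_ℂ = 0)
    (h : IsJLEmbedding δ L {u + v, u - v, u + I • v, u - I • v}) :
    ‖⟪L u, L v⟫_ℂ‖ ≤ 2 * δ := by
  have hre : |(⟪L u, L v⟫_ℂ).re| ≤ δ := by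
    simpa [hu, hv, huv, one_add_one_eq_two] using
      abs_re_inner_map_sub_le (x := u) (y := v) (h.mono (by simp [Set.insert_subset_iff]))
  have him : |(⟪L u, L v⟫_ℂ).im| ≤ δ := by
    simpa [hu, hv, huv, inner_smul_right, norm_smul, one_add_one_eq_two] using
      abs_re_inner_map_sub_le (x := u) (y := I • v) (h.mono (by simp [Set.insert_subset_iff]))
  calc ‖⟪L u, L v⟫_ℂ‖ ≤ |(⟪L u, L v⟫_ℂ).re| + |(⟪L u, L v⟫_ℂ).im| :=
        Complex.norm_le_abs_re_add_abs_im _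
    _ ≤ 2 * δ := by linarith

theorem abs_norm_map_add_sq_sub_le_of_orthonormal [Fintype ι] {L : E →ₗ[ℂ] F} {T : ι → E}
    (hT : Orthonormal ℂ T) {W V : E} (hW : W ≠ 0) (hWT : ∀ k, ⟪T k, W⟫_ℂ = 0)
    (hV : V ∈ Submodule.span ℂ (Set.range T)) {ε : ℝ} (hε : 0 ≤ ε) (hJL : IsJLEmbedding (ε / 6) L {W, V})
    (hJLpair : ∀ k, IsJLEmbedding (ε / (24 * √(Fintype.card ι))) L
      {(‖W‖⁻¹ : ℂ) • W + T k, (‖W‖⁻¹ : ℂ) • W - T k,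
        (‖W‖⁻¹ : ℂ) • W + I • T k, (‖W‖⁻¹ : ℂ) • W - I • T k}) :
    |‖L (W + V)‖ ^ 2 - ‖W + V‖ ^ 2| ≤ ε / 3 * ‖W + V‖ ^ 2 := by
  set u := (‖W‖⁻¹ : ℂ) • W
  have hu : ‖u‖ = 1 := norm_smul_inv_norm hW
  have hWu : W = (‖W‖ : ℂ) • u := by
    rw [smul_smul, mul_inv_cancel₀ (by simpa using hW), one_smul]
  have hpair (k : ι) : ‖⟪L u, L (T k)⟫_ℂ‖ ≤ ε / 12 / √(Fintype.card ι) := by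
    have huT : ⟪u, T k⟫_ℂ = 0 := by rw [inner_smul_left, inner_eq_zero_symm.1 (hWT k), mul_zero]
    refine (norm_inner_map_le_of_orthonormal_pair hu (hT.1 k) huT (hJLpair k)).trans_eq ?_
    ring
  have hsum : √(∑ k, ‖⟪L u, L (T k)⟫_ℂ‖ ^ 2) ≤ ε / 12 :=
    sqrt_sum_sq_le_of_forall_abs_le (by positivity) fun k => (abs_norm _).trans_le (hpair k)
  have hcross : ‖⟪L W, L V⟫_ℂ‖ ≤ ε / 12 * ‖W‖ * ‖V‖ :=
    calc ‖⟪L W, L V⟫_ℂ‖ = ‖W‖ * ‖⟪L u, L V⟫_ℂ‖ := by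
          rw [show L W = (‖W‖ : ℂ) • L u by rw [← map_smul, ← hWu], inner_smul_left, norm_mul,
            Complex.norm_conj, Complex.norm_real, Real.norm_of_nonneg (norm_nonneg W)]
      _ ≤ ‖W‖ * (√(∑ k, ‖⟪L u, L (T k)⟫_ℂ‖ ^ 2) * ‖V‖) := by
          gcongr; exact hT.norm_apply_le_of_mem_span (innerₛₗ ℂ (L u) ∘ₗ L) hV
      _ ≤ ‖W‖ * (ε / 12 * ‖V‖) := by gcongr
      _ = ε / 12 * ‖W‖ * ‖V‖ := by ring
  have hWV : ⟪W, V⟫_ℂ = 0 :=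
    Submodule.mem_orthogonal_singleton_iff_inner_right.1 <| Submodule.span_le.2
      (Set.range_subset_iff.2 fun k => Submodule.mem_orthogonal_singleton_iff_inner_right.2
        (inner_eq_zero_symm.1 (hWT k))) hV
  calc |‖L (W + V)‖ ^ 2 - ‖W + V‖ ^ 2| ≤ (ε / 6 + ε / 12) * ‖W + V‖ ^ 2 :=
        abs_norm_map_add_sq_sub_le hWV hJL (by positivity) hcross
    _ ≤ ε / 3 * ‖W + V‖ ^ 2 := by gcongr; linarith

end Complex

section Tensor

open WithLp

variable {ι κ : Type*}

theorem tnsq_eq_norm_sq [Fintype ι] (X : ι → ℂ) : tnsq X = ‖toLp 2 X‖ ^ 2 := by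
  rw [EuclideanSpace.norm_sq_eq]; rfl

theorem ttip_eq_inner [Fintype ι] (X Y : ι → ℂ) : ttip X Y = ⟪toLp 2 Y, toLp 2 X⟫_ℂ := by
  simp [ttip, PiLp.inner_apply]

theorem orthonormal_toLp_of_ttip [Fintype ι] {α : Type*} [DecidableEq α] {T : α → ι → ℂ}
    (hT : ∀ k h, ttip (T k) (T h) = if k = h then 1 else 0) :
    Orthonormal ℂ fun k => toLp 2 (T k) := by
  rw [orthonormal_iff_ite]
  intro k h
  rw [← ttip_eq_inner, hT]
  simp [eq_comm]

theorem toLp_projPerp [Fintype ι] {r : ℕ} (T : Fin r → ι → ℂ) (X : ι → ℂ) :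
    toLp 2 (projPerp T X) = toLp 2 X - ∑ k, ⟪toLp 2 (T k), toLp 2 X⟫_ℂ • toLp 2 (T k) := by
  simp [projPerp, ttip_eq_inner]

theorem inner_toLp_projPerp [Fintype ι] {r : ℕ} {T : Fin r → ι → ℂ}
    (hT : ∀ k h, ttip (T k) (T h) = if k = h then 1 else 0) (X : ι → ℂ) (k : Fin r) :
    ⟪toLp 2 (T k), toLp 2 (projPerp T X)⟫_ℂ = 0 := by
  rw [toLp_projPerp, inner_sub_right, (orthonormal_toLp_of_ttip hT).inner_right_fintype, sub_self]

theorem sub_projPerp_mem_span [Fintype ι] {r : ℕ} (T : Fin r → ι → ℂ) (X : ι → ℂ) :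
    X - projPerp T X ∈ Submodule.span ℂ (Set.range T) := by
  rw [projPerp, sub_sub_cancel]
  exact Submodule.sum_mem _ fun k _ => Submodule.smul_mem _ _ (Submodule.subset_span ⟨k, rfl⟩)

theorem toLp_mem_span_toLp {α : Type*} {T : α → ι → ℂ} {V : ι → ℂ}
    (hV : V ∈ Submodule.span ℂ (Set.range T)) :
    toLp 2 V ∈ Submodule.span ℂ (Set.range fun k => toLp 2 (T k)) := by
  have := Submodule.apply_mem_span_image_of_mem_span
    (WithLp.linearEquiv 2 ℂ (ι → ℂ)).symm.toLinearMap hV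
  rwa [← Set.range_comp] at this

noncomputable def LinearMap.toEuclideanLin (L₀ : (ι → ℂ) →ₗ[ℂ] (κ → ℂ)) :
    EuclideanSpace ℂ ι →ₗ[ℂ] EuclideanSpace ℂ κ :=
  (WithLp.linearEquiv 2 ℂ (κ → ℂ)).symm.toLinearMap ∘ₗ L₀ ∘ₗ
    (WithLp.linearEquiv 2 ℂ (ι → ℂ)).toLinearMap

@[simp]
theorem LinearMap.toEuclideanLin_toLp (L₀ : (ι → ℂ) →ₗ[ℂ] (κ → ℂ)) (X : ι → ℂ) :
    L₀.toEuclideanLin (toLp 2 X) = toLp 2 (L₀ X) :=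
  rfl

theorem IsJLmap.isJLEmbedding [Fintype ι] [Fintype κ] {ε : ℝ} {L₀ : (ι → ℂ) →ₗ[ℂ] (κ → ℂ)}
    {S : Set (ι → ℂ)} (h : IsJLmap ε L₀ S) : IsJLEmbedding ε L₀.toEuclideanLin (ofLp ⁻¹' S) := by
  intro z hz
  obtain ⟨e, he, hze⟩ := h _ hz
  rw [tnsq_eq_norm_sq, tnsq_eq_norm_sq, toLp_ofLp] at hze
  change ‖L₀.toEuclideanLin z‖ ^ 2 = _ at hze
  rw [hze, show (1 + e) * ‖z‖ ^ 2 - ‖z‖ ^ 2 = e * ‖z‖ ^ 2 by ring, abs_mul, abs_sq]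
  exact mul_le_mul_of_nonneg_right (abs_lt.2 he).le (sq_nonneg _)

end Tensor

/-- Embeddings for compressed least squares:  if `L₀` is an `(ε/6)`-JL embedding of
`L ∪ {P_{L^⊥}(X)}` and an `(ε/(24√r))`-JL embedding of the `4r` tensors
`{P_{L^⊥}(X)/‖P_{L^⊥}(X)‖ ± T_k, P_{L^⊥}(X)/‖P_{L^⊥}(X)‖ ± i T_k}`, where
`L = span{T_1,…,T_r}` with the `T_k` orthonormal and `P_{L^⊥}(X) ≠ 0`, then
`|‖L₀(X - Y)‖² - ‖X - Y‖²| ≤ (ε/3)‖X - Y‖²` for all `Y ∈ L`. -/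
theorem compressed_least_squares_embedding {d d' r : ℕ} {n : Fin d → ℕ}
    {md : Fin d' → ℕ} {ε : ℝ} (hε : ε ∈ Set.Ioo (0 : ℝ) 1)
    (X : ((i : Fin d) → Fin (n i)) → ℂ)
    (T : Fin r → ((i : Fin d) → Fin (n i)) → ℂ)
    (hT : ∀ k h, ttip (T k) (T h) = if k = h then 1 else 0)
    (L₀ : (((i : Fin d) → Fin (n i)) → ℂ) →ₗ[ℂ] (((i : Fin d') → Fin (md i)) → ℂ))
    (hW : projPerp T X ≠ 0)
    (hJL1 : IsJLmap (ε / 6) L₀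
      ((Submodule.span ℂ (Set.range T) : Set _) ∪ {projPerp T X}))
    (hJL2 : IsJLmap (ε / (24 * Real.sqrt r)) L₀
      {Z | ∃ k : Fin r,
        Z = (Real.sqrt (tnsq (projPerp T X)) : ℂ)⁻¹ • projPerp T X - T k ∨
        Z = (Real.sqrt (tnsq (projPerp T X)) : ℂ)⁻¹ • projPerp T X + T k ∨
        Z = (Real.sqrt (tnsq (projPerp T X)) : ℂ)⁻¹ • projPerp T X - Complex.I • T k ∨
        Z = (Real.sqrt (tnsq (projPerp T X)) : ℂ)⁻¹ • projPerp T X + Complex.I • T k}) :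
    ∀ Y ∈ Submodule.span ℂ (Set.range T),
      |tnsq (L₀ (X - Y)) - tnsq (X - Y)| ≤ (ε / 3) * tnsq (X - Y) := by
  intro Y hY
  set W := projPerp T X
  have hV : X - W - Y ∈ Submodule.span ℂ (Set.range T) :=
    Submodule.sub_mem _ (sub_projPerp_mem_span T X) hY
  have hsqrt : √(tnsq W) = ‖WithLp.toLp 2 W‖ := by
    rw [tnsq_eq_norm_sq, Real.sqrt_sq (norm_nonneg _)]
  have key := abs_norm_map_add_sq_sub_le_of_orthonormal (L := L₀.toEuclideanLin)
    (W := WithLp.toLp 2 W) (V := WithLp.toLp 2 (X - W - Y))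
    (orthonormal_toLp_of_ttip hT) (by simpa using hW) (inner_toLp_projPerp hT X)
    (toLp_mem_span_toLp hV) hε.1.le
    (hJL1.isJLEmbedding.mono (by simp [Set.insert_subset_iff, hV])) fun k => by
      rw [Fintype.card_fin]
      refine hJL2.isJLEmbedding.mono fun z hz => ?_
      rcases hz with rfl | rfl | rfl | rfl <;> exact ⟨k, by simp [hsqrt]⟩
  rw [show X - Y = W + (X - W - Y) by abel, tnsq_eq_norm_sq, tnsq_eq_norm_sq]
  simpa using key
end
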